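/- arXiv:2206.09808 — 4 statements merged into one kernel-verified Lean document; each statement's English description precedes it below -/
import Mathlib

section
/- For every vertex x of the infinite hexagonal grid T_H and every integer k ≥ 1, the number of vertices at graph distance exactly k from x is 3k. -/
/-- The infinite hexagonal grid `T_H` on vertex set ℤ×ℤ: `(i,j)` is adjacent to `(i,j±1)`, and
`(i,j)` is adjacent to `(i+1,j)` iff `i+j` is even. -/
def TH : SimpleGraph (ℤ × ℤ) where
  Adj u v :=
    (u.1 = v.1 ∧ (v.2 = u.2 + 1 ∨ u.2 = v.2 + 1)) ∨
    (u.2 = v.2 ∧ ((v.1 = u.1 + 1 ∧ (u.1 + u.2) % 2 = 0) ∨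
                  (u.1 = v.1 + 1 ∧ (v.1 + v.2) % 2 = 0)))
  symm := by
    constructor
    intro u v h
    omega
  loopless := by
    constructor
    intro u h
    omega

/-- An `l`-distance coloring of `T_H`. -/
def IsDistColoring (l : ℕ) (f : ℤ × ℤ → ℕ) : Prop :=
  ∀ u v : ℤ × ℤ, u ≠ v → TH.dist u v ≤ l → f u ≠ f v

/-- The six corner vertices of `F_{x,k}` for a right vertex `x`. -/
def corners (x : ℤ × ℤ) (k : ℕ) : Set (ℤ × ℤ) :=
  {(x.1, x.2 + (k : ℤ)), (x.1 + ((k+1)/2 : ℕ), x.2 + (k/2 : ℕ)),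
   (x.1 + ((k+1)/2 : ℕ), x.2 - (k/2 : ℕ)), (x.1, x.2 - (k : ℤ)),
   (x.1 - (k/2 : ℕ), x.2 - ((k+1)/2 : ℕ)), (x.1 - (k/2 : ℕ), x.2 + ((k+1)/2 : ℕ))}

/-- `S_{x,k}^{2h}`: non-corner vertices of `F_{x,k}` at distance exactly `2h`
from some corner vertex of `F_{x,k}`. -/
def Sset (x : ℤ × ℤ) (k h : ℕ) : Set (ℤ × ℤ) :=
  {v | TH.dist x v = k ∧ v ∉ corners x k ∧ ∃ u ∈ corners x k, TH.dist v u = 2 * h}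

/-!
Seen from a vertex of even coordinate sum, the distance to the vertex at offset `(a, b)` is
`max (|a| + |b|) |2a - (a + b) % 2|`: this function changes by at most one along every edge and
drops by one along some edge at every vertex other than the centre. A vertex of odd coordinate
sum is moved to the origin by an automorphism that also reflects the first coordinate. The
sphere of radius `k` is then a hexagon: two vertical sides with `⌊k/2⌋ + 1` and `⌈k/2⌉ + 1`
vertices and two zigzags with `k - 1` vertices each, `3k` in all.
-/

namespace SimpleGraph

variable {V : Type*} (G : SimpleGraph V) {f : V → ℕ}

theorem le_add_length_of_lipschitz (hlip : ∀ u v, G.Adj u v → f u ≤ f v + 1)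
    {v u : V} (w : G.Walk v u) : f u ≤ f v + w.length := by
  induction w with
  | nil => simp
  | cons h _ ih =>
    rw [Walk.length_cons]
    have := hlip _ _ h.symm
    omega

theorem exists_walk_length_eq_of_descent {x : V} (hzero : ∀ u, f u = 0 → u = x)
    (hdesc : ∀ u, f u ≠ 0 → ∃ v, G.Adj u v ∧ f v + 1 = f u) (u : V) :
    ∃ w : G.Walk x u, w.length = f u := by
  induction hn : f u generalizing u with
  | zero => obtain rfl := hzero u hn; exact ⟨.nil, rfl⟩
  | succ n ih =>
    obtain ⟨v, hadj, hv⟩ := hdesc u (by omega)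
    obtain ⟨w, hw⟩ := ih v (by omega)
    exact ⟨w.concat hadj.symm, by rw [Walk.length_concat, hw]⟩

theorem dist_eq_of_lipschitz_of_descent {x : V} (hzero : ∀ u, f u = 0 ↔ u = x)
    (hlip : ∀ u v, G.Adj u v → f u ≤ f v + 1)
    (hdesc : ∀ u, f u ≠ 0 → ∃ v, G.Adj u v ∧ f v + 1 = f u) (u : V) : G.dist x u = f u := by
  obtain ⟨w, hw⟩ := G.exists_walk_length_eq_of_descent (fun u => (hzero u).1) hdesc u
  obtain ⟨w', hw'⟩ := Reachable.exists_walk_length_eq_dist ⟨w⟩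
  have hfx : f x = 0 := (hzero x).2 rfl
  have := G.le_add_length_of_lipschitz hlip w'
  have := G.dist_le w
  omega

end SimpleGraph

def hexDist (p : ℤ × ℤ) : ℕ := max (p.1.natAbs + p.2.natAbs) (2 * p.1 - (p.1 + p.2) % 2).natAbs

theorem hexDist_eq_zero_iff (p : ℤ × ℤ) : hexDist p = 0 ↔ p = 0 := by
  simp only [hexDist, Prod.ext_iff, Prod.fst_zero, Prod.snd_zero]; omega

theorem hexDist_le_of_adj {p q : ℤ × ℤ} (h : TH.Adj p q) : hexDist p ≤ hexDist q + 1 := by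
  simp only [TH, hexDist] at *; omega

theorem exists_adj_hexDist_add_one {p : ℤ × ℤ} (hp : hexDist p ≠ 0) :
    ∃ q, TH.Adj p q ∧ hexDist q + 1 = hexDist p := by
  obtain ⟨a, b⟩ := p
  simp only [TH, hexDist] at *
  rcases Int.emod_two_eq (a + b) with hr | hr
  · by_cases h1 : a ≤ 0 ∧ a.natAbs + b.natAbs ≤ -2 * a
    · exact ⟨(a + 1, b), by omega, by omega⟩
    by_cases h2 : 1 ≤ a ∧ a.natAbs + b.natAbs < 2 * a
    · exact ⟨(a, b - 1), by omega, by omega⟩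
    rcases le_or_gt b 0 with hb | hb
    · exact ⟨(a, b + 1), by omega, by omega⟩
    · exact ⟨(a, b - 1), by omega, by omega⟩
  · by_cases h1 : 1 ≤ a ∧ a.natAbs + b.natAbs ≤ 2 * a - 1
    · exact ⟨(a - 1, b), by omega, by omega⟩
    rcases le_or_gt b 0 with hb | hb
    · exact ⟨(a, b + 1), by omega, by omega⟩
    · exact ⟨(a, b - 1), by omega, by omega⟩

-- For odd `x.1 + x.2` the translation by `-x` does not preserve the horizontal edges, hence the
-- reflection of the first coordinate.
def recenter (x : ℤ × ℤ) : TH ≃g TH where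
  toFun u := (if (x.1 + x.2) % 2 = 0 then u.1 - x.1 else x.1 - u.1, u.2 - x.2)
  invFun p := (if (x.1 + x.2) % 2 = 0 then p.1 + x.1 else x.1 - p.1, p.2 + x.2)
  left_inv u := by ext <;> split_ifs <;> simp
  right_inv p := by ext <;> split_ifs <;> simp
  map_rel_iff' {u v} := by simp only [TH, Equiv.coe_fn_mk]; split_ifs <;> omega

theorem recenter_self (x : ℤ × ℤ) : recenter x x = 0 := by
  ext <;> simp [recenter]

theorem dist_eq_hexDist_recenter (x u : ℤ × ℤ) : TH.dist x u = hexDist (recenter x u) := by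
  refine TH.dist_eq_of_lipschitz_of_descent (f := hexDist ∘ recenter x) ?_ ?_ ?_ u
  · intro v
    rw [Function.comp_apply, hexDist_eq_zero_iff, ← recenter_self x, (recenter x).apply_eq_iff_eq]
  · intro v w h
    exact hexDist_le_of_adj ((recenter x).map_adj_iff.2 h)
  · intro v hv
    obtain ⟨q, hadj, hq⟩ := exists_adj_hexDist_add_one hv
    refine ⟨(recenter x).symm q, ?_, by simpa using hq⟩
    rwa [← (recenter x).map_adj_iff, RelIso.apply_symm_apply]

noncomputable def hexSphere (k : ℕ) : Finset (ℤ × ℤ) :=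
  ((Finset.Icc (0 : ℤ) (k / 2)).image fun j => ((k + 1) / 2, k / 2 - 2 * j)) ∪
  ((Finset.Icc (0 : ℤ) ((k + 1) / 2)).image fun j => (-(k / 2), (k + 1) / 2 - 2 * j)) ∪
  ((Finset.Ioo (-(k / 2 : ℤ)) ((k + 1) / 2)).image fun a => (a, k - a.natAbs)) ∪
  ((Finset.Ioo (-(k / 2 : ℤ)) ((k + 1) / 2)).image fun a => (a, a.natAbs - k))

theorem mem_hexSphere {k : ℕ} {p : ℤ × ℤ} : p ∈ hexSphere k ↔ hexDist p = k := by
  obtain ⟨a, b⟩ := p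
  simp only [hexSphere, hexDist, Finset.mem_union, Finset.mem_image, Finset.mem_Icc,
    Finset.mem_Ioo, Prod.mk.injEq]
  constructor
  · rintro (((⟨j, hj, rfl, rfl⟩ | ⟨j, hj, rfl, rfl⟩) | ⟨a, ha, rfl, rfl⟩) | ⟨a, ha, rfl, rfl⟩) <;>
      omega
  · intro h
    by_cases hright : a = (k + 1) / 2
    · exact .inl <| .inl <| .inl ⟨(k / 2 - b) / 2, by omega, hright.symm, by omega⟩
    by_cases hleft : a = -(k / 2)
    · exact .inl <| .inl <| .inr ⟨((k + 1) / 2 - b) / 2, by omega, hleft.symm, by omega⟩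
    rcases le_or_gt 0 b with hb | hb
    · exact .inl <| .inr ⟨a, by omega, rfl, by omega⟩
    · exact .inr ⟨a, by omega, rfl, by omega⟩

theorem card_hexSphere {k : ℕ} (hk : 1 ≤ k) : (hexSphere k).card = 3 * k := by
  rw [hexSphere, Finset.card_union_of_disjoint, Finset.card_union_of_disjoint,
    Finset.card_union_of_disjoint]
  · rw [Finset.card_image_of_injective _ (fun a b hab => by
        simp only [Prod.mk.injEq] at hab; omega),
      Finset.card_image_of_injective _ (fun a b hab => by
        simp only [Prod.mk.injEq] at hab; omega),
      Finset.card_image_of_injective _ (fun a b hab => by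
        simp only [Prod.mk.injEq] at hab; omega),
      Finset.card_image_of_injective _ (fun a b hab => by
        simp only [Prod.mk.injEq] at hab; omega),
      Int.card_Icc, Int.card_Icc, Int.card_Ioo]
    omega
  all_goals
    simp only [Finset.disjoint_left, Finset.mem_union, Finset.mem_image, Finset.mem_Icc,
      Finset.mem_Ioo]
    rintro _ hp ⟨c, hc, rfl⟩
    simp only [Prod.mk.injEq] at hp
    grind

/-- For every vertex `x` of `T_H` and every `k ≥ 1`, there are exactly `3k` vertices at
graph distance exactly `k` from `x`. -/
theorem card_sphere (x : ℤ × ℤ) (k : ℕ) (hk : 1 ≤ k) :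
    {u : ℤ × ℤ | TH.dist x u = k}.encard = ((3 * k : ℕ) : ℕ∞) := by
  have hsphere : {u : ℤ × ℤ | TH.dist x u = k} = recenter x ⁻¹' ↑(hexSphere k) := by
    ext u
    simp only [Set.mem_preimage, Finset.mem_coe, mem_hexSphere, dist_eq_hexDist_recenter]
    rfl
  rw [hsphere, Set.encard_preimage_of_bijective (recenter x).bijective,
    Set.encard_coe_eq_coe_finsetCard, card_hexSphere hk]
end

section
/- For every vertex x of the infinite hexagonal grid T_H and every integer p ≥ 0, the closed ball B(x,p) = {u : d(x,u) ≤ p} contains exactly 1 + 3p(p+1)/2 vertices. -/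
/-! The distance in `TH` from the origin to `(a, b)` has a closed form `originDist (a, b)`: the
formula is `1`-Lipschitz along edges, and from every vertex other than the origin some edge
decreases it, so it agrees with the graph distance. As `TH` is vertex-transitive, every ball is
the image of a ball around the origin under an automorphism. Ordering the columns as
`0, 1, -1, 2, -2, …`, the ball of radius `p` around the origin meets exactly the columns with
index `n ≤ p`: in column `n < p` it is an interval of `2 (p - ⌈n/2⌉) + 1` vertices, and in
column `p` it contains every other vertex of an interval, `⌊p/2⌋ + 1` of them. These add up to
`1 + 3p(p+1)/2`. -/

namespace SimpleGraph

variable {V W : Type*} {G : SimpleGraph V} {G' : SimpleGraph W}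

lemma Hom.edist_le (f : G →g G') (u v : V) : G'.edist (f u) (f v) ≤ G.edist u v :=
  le_iInf fun p => (SimpleGraph.edist_le (p.map f)).trans_eq (by simp)

lemma Iso.edist_eq (f : G ≃g G') (u v : V) : G'.edist (f u) (f v) = G.edist u v := by
  refine le_antisymm (Hom.edist_le f.toHom u v) ?_
  simpa using Hom.edist_le f.symm.toHom (f u) (f v)

lemma Iso.dist_eq (f : G ≃g G') (u v : V) : G'.dist (f u) (f v) = G.dist u v := by
  simp only [dist, f.edist_eq]

lemma Iso.image_setOf_dist_le (f : G ≃g G') (x : V) (r : ℕ) :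
    f '' {u | G.dist x u ≤ r} = {w | G'.dist (f x) w ≤ r} := by
  ext w
  obtain ⟨u, rfl⟩ := f.surjective w
  simp [f.injective.mem_set_image, f.dist_eq]

lemma le_add_length_of_forall_adj (f : V → ℕ) (hf : ∀ u w, G.Adj u w → f u ≤ f w + 1)
    {u v : V} (p : G.Walk u v) : f u ≤ f v + p.length := by
  induction p with
  | nil => simp
  | cons h _ ih => grind [Walk.length_cons]

lemma exists_walk_length_le_of_forall_exists_adj (f : V → ℕ) {t : V} (ht : ∀ u, f u = 0 → u = t)
    (hdesc : ∀ u, 0 < f u → ∃ w, G.Adj u w ∧ f w < f u) (u : V) :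
    ∃ p : G.Walk u t, p.length ≤ f u := by
  induction hn : f u using Nat.strong_induction_on generalizing u with
  | _ n ih =>
    rcases Nat.eq_zero_or_pos n with rfl | hpos
    · obtain rfl := ht u hn
      exact ⟨.nil, by simp⟩
    · obtain ⟨w, hadj, hlt⟩ := hdesc u (hn ▸ hpos)
      obtain ⟨p, hp⟩ := ih (f w) (hn ▸ hlt) w rfl
      exact ⟨.cons hadj p, by grind [Walk.length_cons]⟩

theorem dist_eq_of_forall_adj (f : V → ℕ) {t : V} (ht : ∀ u, f u = 0 ↔ u = t)
    (hf : ∀ u w, G.Adj u w → f u ≤ f w + 1)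
    (hdesc : ∀ u, 0 < f u → ∃ w, G.Adj u w ∧ f w < f u) (u : V) : G.dist u t = f u := by
  obtain ⟨p, hp⟩ := exists_walk_length_le_of_forall_exists_adj f (fun u => (ht u).1) hdesc u
  obtain ⟨q, hq⟩ := p.reachable.exists_walk_length_eq_dist
  have hft : f t = 0 := (ht t).2 rfl
  have := le_add_length_of_forall_adj f hf q
  have := dist_le p
  omega

end SimpleGraph

def colIndex (a : ℤ) : ℕ := if 0 < a then 2 * a.natAbs - 1 else 2 * a.natAbs

/-- A walk from the origin to `(a, b)` makes at least `|a| + |b|` steps and at least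
`colIndex a` steps (its horizontal steps alternate with vertical ones, and the origin has no
neighbour on its left), and its length has the parity of `a + b` because `TH` is bipartite. -/
def originDist (v : ℤ × ℤ) : ℕ :=
  max (v.1.natAbs + v.2.natAbs) (colIndex v.1 + (colIndex v.1 + v.1.natAbs + v.2.natAbs) % 2)

lemma originDist_eq_zero_iff (v : ℤ × ℤ) : originDist v = 0 ↔ v = 0 := by
  obtain ⟨a, b⟩ := v
  simp only [originDist, colIndex, Prod.mk_eq_zero]
  split_ifs <;> omega

lemma originDist_le_add_one_of_adj {u w : ℤ × ℤ} (h : TH.Adj u w) :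
    originDist u ≤ originDist w + 1 := by
  obtain ⟨a, b⟩ := u
  obtain ⟨c, d⟩ := w
  simp only [TH, originDist, colIndex] at *
  split_ifs <;> omega

lemma exists_adj_originDist_lt {u : ℤ × ℤ} (h : 0 < originDist u) :
    ∃ w, TH.Adj u w ∧ originDist w < originDist u := by
  obtain ⟨a, b⟩ := u
  refine ⟨if a < 0 ∧ (a + b) % 2 = 0 then (a + 1, b)
    else if 0 < a ∧ (a + b) % 2 = 1 then (a - 1, b)
    else if b < 0 then (a, b + 1) else (a, b - 1), ?_, ?_⟩ <;>
  simp only [TH, originDist, colIndex] at * <;> split_ifs at * <;> omega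

lemma TH.dist_zero (v : ℤ × ℤ) : TH.dist 0 v = originDist v := by
  rw [TH.dist_comm]
  exact TH.dist_eq_of_forall_adj originDist originDist_eq_zero_iff
    (fun _ _ => originDist_le_add_one_of_adj) (fun _ => exists_adj_originDist_lt) v

/-- For odd `x` this is the reflection `(i, j) ↦ (1 - i, j)` followed by a translation by a
vector of even parity; both preserve `TH`. -/
def TH.originTo (x : ℤ × ℤ) : TH ≃g TH where
  toFun v := if (x.1 + x.2) % 2 = 0 then (x.1 + v.1, x.2 + v.2) else (x.1 - v.1, x.2 + v.2)
  invFun w := if (x.1 + x.2) % 2 = 0 then (w.1 - x.1, w.2 - x.2) else (x.1 - w.1, w.2 - x.2)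
  left_inv v := by dsimp only; split_ifs <;> ext <;> simp
  right_inv w := by dsimp only; split_ifs <;> ext <;> simp
  map_rel_iff' {u v} := by
    obtain ⟨a, b⟩ := u
    obtain ⟨c, d⟩ := v
    simp only [TH, Equiv.coe_fn_mk]
    split_ifs <;> omega

lemma TH.originTo_zero (x : ℤ × ℤ) : TH.originTo x 0 = x := by
  simp [TH.originTo]

def colOfIndex (n : ℕ) : ℤ := if n % 2 = 1 then ((n + 1) / 2 : ℕ) else -((n / 2 : ℕ) : ℤ)

lemma colOfIndex_colIndex (a : ℤ) : colOfIndex (colIndex a) = a := by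
  unfold colOfIndex colIndex; split_ifs <;> omega

lemma colIndex_colOfIndex (n : ℕ) : colIndex (colOfIndex n) = n := by
  unfold colOfIndex colIndex; split_ifs <;> omega

def parityInterval (m : ℕ) : Finset ℤ :=
  (Finset.range (m + 1)).image fun k : ℕ => 2 * (k : ℤ) - m

lemma mem_parityInterval {m : ℕ} {b : ℤ} :
    b ∈ parityInterval m ↔ b.natAbs ≤ m ∧ (b + m) % 2 = 0 := by
  simp only [parityInterval, Finset.mem_image, Finset.mem_range]
  constructor
  · rintro ⟨k, hk, rfl⟩
    omega
  · intro hb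
    exact ⟨((b + m) / 2).toNat, by omega, by omega⟩

lemma card_parityInterval (m : ℕ) : (parityInterval m).card = m + 1 := by
  rw [parityInterval, Finset.card_image_of_injective _ (fun k l h => by simpa using h),
    Finset.card_range]

noncomputable def ballColumn (p n : ℕ) : Finset ℤ :=
  if n < p then Finset.Icc (-((p - (n + 1) / 2 : ℕ) : ℤ)) (p - (n + 1) / 2 : ℕ)
  else parityInterval (p / 2)

noncomputable def ballFinset (p : ℕ) : Finset (ℤ × ℤ) :=
  (Finset.range (p + 1)).biUnion fun n => {colOfIndex n} ×ˢ ballColumn p n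

lemma mem_ballFinset {p : ℕ} {v : ℤ × ℤ} : v ∈ ballFinset p ↔ originDist v ≤ p := by
  obtain ⟨a, b⟩ := v
  have hcol : ∀ n, a = colOfIndex n ↔ colIndex a = n := fun n =>
    ⟨fun h => h ▸ colIndex_colOfIndex n, fun h => h ▸ (colOfIndex_colIndex a).symm⟩
  simp only [ballFinset, Finset.mem_biUnion, Finset.mem_range, Finset.mem_product,
    Finset.mem_singleton, hcol]
  rw [show (∃ n < p + 1, colIndex a = n ∧ b ∈ ballColumn p n) ↔
      colIndex a ≤ p ∧ b ∈ ballColumn p (colIndex a) by grind, ballColumn]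
  split_ifs
  · simp only [Finset.mem_Icc, originDist, colIndex] at *
    split_ifs at * <;> omega
  · simp only [mem_parityInterval, originDist, colIndex] at *
    split_ifs at * <;> omega

lemma card_ballColumn (p n : ℕ) :
    (ballColumn p n).card = if n < p then 2 * (p - (n + 1) / 2) + 1 else p / 2 + 1 := by
  unfold ballColumn
  split_ifs
  · simp only [Int.card_Icc]; omega
  · exact card_parityInterval _

lemma sum_card_ballColumn (p : ℕ) :
    ∑ n ∈ Finset.range (p + 1), (ballColumn p n).card = 1 + 3 * p * (p + 1) / 2 := by
  simp only [card_ballColumn, Finset.sum_range_succ, lt_irrefl, if_false]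
  rw [Finset.sum_congr rfl fun n hn => if_pos (Finset.mem_range.1 hn)]
  suffices h : ∀ p : ℕ, 2 * (∑ n ∈ Finset.range p, (2 * (p - (n + 1) / 2) + 1) + (p / 2 + 1)) =
      2 + 3 * p * (p + 1) by have := h p; omega
  intro p
  induction p with
  | zero => simp
  | succ p ih =>
    rw [Finset.sum_range_succ, Finset.sum_congr rfl fun n hn =>
      (show 2 * (p + 1 - (n + 1) / 2) + 1 = 2 * (p - (n + 1) / 2) + 1 + 2 by
        have := Finset.mem_range.1 hn; omega), Finset.sum_add_distrib]
    simp only [Finset.sum_const, Finset.card_range, smul_eq_mul]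
    have : 3 * (p + 1) * (p + 1 + 1) = 3 * p * (p + 1) + 6 * (p + 1) := by ring
    omega

lemma card_ballFinset (p : ℕ) : (ballFinset p).card = 1 + 3 * p * (p + 1) / 2 := by
  rw [ballFinset, Finset.card_biUnion]
  · simp only [Finset.card_product, Finset.card_singleton, one_mul, sum_card_ballColumn]
  · intro m _ n _ hmn
    simp only [Function.onFun, Finset.disjoint_left, Finset.mem_product, Finset.mem_singleton]
    rintro v ⟨hm, _⟩ ⟨hn, _⟩
    exact hmn (by rw [← colIndex_colOfIndex m, ← colIndex_colOfIndex n, ← hm, ← hn])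

/-- For every vertex `x` of `T_H` and every `p ≥ 0`, the closed ball `B(x,p)` contains
exactly `1 + 3p(p+1)/2` vertices. -/
theorem card_ball (x : ℤ × ℤ) (p : ℕ) :
    {u : ℤ × ℤ | TH.dist x u ≤ p}.encard = ((1 + 3*p*(p+1)/2 : ℕ) : ℕ∞) := by
  have hball : {u : ℤ × ℤ | TH.dist 0 u ≤ p} = ballFinset p := by
    ext v
    simp [TH.dist_zero, mem_ballFinset]
  rw [← TH.originTo_zero x, ← (TH.originTo x).image_setOf_dist_le,
    (TH.originTo x).injective.encard_image, hball, Set.encard_coe_eq_coe_finsetCard,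
    card_ballFinset]
end

section
/- Let x = (i,j) be a right vertex of the infinite hexagonal grid T_H, let p ≥ 5 be an integer, let q be an integer with 0 ≤ q ≤ p−3, and let v be a non-corner vertex of F_{x,p−q}. Then in any 2p-distance coloring f of T_H, at most 1 vertex u with d(x,u) = p+q+1 satisfies f(u) = f(v). -/
/-!
Distances from a right vertex `x` are cut out by six linear inequalities and a parity condition,
so the sphere `F_{x,n}` is a hexagon made of six sides. If `v` lies on a side of
`F_{x,k}` without being a corner, every `u` with `d(x,u) ≤ m` and `d(u,v) ≥ k + m` lies on the
opposite side of `F_{x,m}`, and any two vertices on one side of `F_{x,m}` are at distance at most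
`m + 1`. For `k = p - q` and `m = p + q + 1`, two vertices of `F_{x,m}` coloured like `v` would be
at distance at least `2p + 1` from `v` and from each other, yet at most `p + q + 2 ≤ 2p` apart.
-/

def HexLe (a b n : ℤ) : Prop :=
  2 * a - 1 ≤ n ∧ -2 * a ≤ n ∧ a + b ≤ n ∧ a - b ≤ n ∧ -a + b ≤ n ∧ -a - b ≤ n ∧
    (n + a + b) % 2 = 0

def HexEq (a b n : ℤ) : Prop := HexLe a b n ∧ ¬HexLe a b (n - 2)

theorem TH_adj_iff (u v : ℤ × ℤ) : TH.Adj u v ↔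
    (u.1 = v.1 ∧ (v.2 = u.2 + 1 ∨ u.2 = v.2 + 1)) ∨
    (u.2 = v.2 ∧ ((v.1 = u.1 + 1 ∧ (u.1 + u.2) % 2 = 0) ∨
                  (u.1 = v.1 + 1 ∧ (v.1 + v.2) % 2 = 0))) := Iff.rfl

section Walks

variable {x : ℤ × ℤ} (hx : (x.1 + x.2) % 2 = 0)
include hx

theorem hexLe_of_walk {y : ℤ × ℤ} (w : TH.Walk y x) :
    HexLe (y.1 - x.1) (y.2 - x.2) w.length := by
  induction w with
  | nil => unfold HexLe; simp only [SimpleGraph.Walk.length_nil]; omega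
  | cons h _ ih =>
    rw [TH_adj_iff] at h
    unfold HexLe at ih ⊢
    simp only [SimpleGraph.Walk.length_cons]
    push_cast
    omega

theorem exists_walk_of_hexLe (n : ℕ) :
    ∀ {a b : ℤ}, HexLe a b n → ∃ w : TH.Walk x (x.1 + a, x.2 + b), w.length = n := by
  induction n with
  | zero =>
    intro a b h
    obtain ⟨rfl, rfl⟩ : a = 0 ∧ b = 0 := by unfold HexLe at h; omega
    exact ⟨SimpleGraph.Walk.nil.copy rfl (by simp), by simp⟩
  | succ n ih =>
    intro a b h
    obtain ⟨a', b', h', hadj⟩ :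
        ∃ a' b' : ℤ, HexLe a' b' n ∧ TH.Adj (x.1 + a', x.2 + b') (x.1 + a, x.2 + b) := by
      unfold HexLe at h ⊢
      simp only [TH_adj_iff]
      push_cast at h
      by_cases h1 : 0 < a ∧ (a + b) % 2 = 1
      · exact ⟨a - 1, b, by omega, by omega⟩
      by_cases h2 : a < 0 ∧ (a + b) % 2 = 0
      · exact ⟨a + 1, b, by omega, by omega⟩
      by_cases h3 : 0 < b
      · exact ⟨a, b - 1, by omega, by omega⟩
      by_cases h4 : b < 0
      · exact ⟨a, b + 1, by omega, by omega⟩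
      · exact ⟨a, 1, by omega, by omega⟩
    obtain ⟨w, hw⟩ := ih h'
    exact ⟨w.concat hadj, by simp [hw]⟩

theorem hexLe_iff_exists_walk (y : ℤ × ℤ) (n : ℕ) :
    HexLe (y.1 - x.1) (y.2 - x.2) n ↔ ∃ w : TH.Walk x y, w.length = n := by
  constructor
  · intro h
    obtain ⟨w, hw⟩ := exists_walk_of_hexLe hx n h
    exact ⟨w.copy rfl (by ext <;> simp), by simp [hw]⟩
  · rintro ⟨w, rfl⟩
    simpa using hexLe_of_walk hx w.reverse

theorem hexEq_dist (y : ℤ × ℤ) : HexEq (y.1 - x.1) (y.2 - x.2) (TH.dist x y) := by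
  set a := y.1 - x.1
  set b := y.2 - x.2
  have hreach : TH.Reachable x y := by
    obtain ⟨w, -⟩ := (hexLe_iff_exists_walk hx y (2 * (a.natAbs + b.natAbs) + ((a + b) % 2).toNat)).1
      (by unfold HexLe; omega)
    exact ⟨w⟩
  obtain ⟨w, hw⟩ := hreach.exists_walk_length_eq_dist
  refine ⟨(hexLe_iff_exists_walk hx y _).2 ⟨w, hw⟩, fun h => ?_⟩
  have h2 : 2 ≤ TH.dist x y := by unfold HexLe at h; omega
  obtain ⟨w', hw'⟩ := (hexLe_iff_exists_walk hx y (TH.dist x y - 2)).1 (by push_cast [h2]; exact h)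
  have := SimpleGraph.dist_le w'
  omega

end Walks

namespace SimpleGraph.Iso

variable {V W : Type*} {G : SimpleGraph V} {G' : SimpleGraph W}

theorem dist_map_le (e : G ≃g G') (u v : V) : G'.dist (e u) (e v) ≤ G.dist u v := by
  by_cases h : G.Reachable u v
  · obtain ⟨w, hw⟩ := h.exists_walk_length_eq_dist
    simpa [hw] using SimpleGraph.dist_le (w.map e.toHom)
  · rw [SimpleGraph.dist_eq_zero_of_not_reachable (e.reachable_iff.not.2 h)]
    exact Nat.zero_le _

theorem dist_map (e : G ≃g G') (u v : V) : G'.dist (e u) (e v) = G.dist u v :=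
  le_antisymm (e.dist_map_le u v) (by simpa using e.symm.dist_map_le (e u) (e v))

end SimpleGraph.Iso

def TH.reflect : TH ≃g TH where
  toFun v := (-v.1, v.2 + 1)
  invFun v := (-v.1, v.2 - 1)
  left_inv v := by simp
  right_inv v := by simp
  map_rel_iff' := by
    intro u v
    simp only [Equiv.coe_fn_mk, TH_adj_iff]
    omega

def IsHexDist (u w : ℤ × ℤ) (n : ℤ) : Prop :=
  ((u.1 + u.2) % 2 = 0 → HexEq (w.1 - u.1) (w.2 - u.2) n) ∧
  ((u.1 + u.2) % 2 = 1 → HexEq (u.1 - w.1) (w.2 - u.2) n)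

theorem isHexDist_dist (u w : ℤ × ℤ) : IsHexDist u w (TH.dist u w) := by
  refine ⟨fun hu => hexEq_dist hu w, fun hu => ?_⟩
  rw [← TH.reflect.dist_map]
  have := hexEq_dist (x := TH.reflect u) (by simp [TH.reflect]; omega) (TH.reflect w)
  have h₁ : (TH.reflect w).1 - (TH.reflect u).1 = u.1 - w.1 := by simp [TH.reflect]; ring
  have h₂ : (TH.reflect w).2 - (TH.reflect u).2 = w.2 - u.2 := by simp [TH.reflect]
  rwa [h₁, h₂] at this

/-- `F_{x,n}` is the union of the six sides `n ≤ sideForm s (u - x)`; side `s` runs from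
`corner x n s` to `corner x n (s + 1)`, so side `s + 3` is the opposite one. -/
def sideForm : Fin 6 → ℤ → ℤ → ℤ
  | 0, a, b => a + b + 1
  | 1, a, _ => 2 * a
  | 2, a, b => a - b + 1
  | 3, a, b => -a - b + 1
  | 4, a, _ => -2 * a + 1
  | 5, a, b => -a + b + 1

def corner (x : ℤ × ℤ) (k : ℕ) : Fin 6 → ℤ × ℤ
  | 0 => (x.1, x.2 + (k : ℤ))
  | 1 => (x.1 + ((k+1)/2 : ℕ), x.2 + (k/2 : ℕ))
  | 2 => (x.1 + ((k+1)/2 : ℕ), x.2 - (k/2 : ℕ))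
  | 3 => (x.1, x.2 - (k : ℤ))
  | 4 => (x.1 - (k/2 : ℕ), x.2 - ((k+1)/2 : ℕ))
  | 5 => (x.1 - (k/2 : ℕ), x.2 + ((k+1)/2 : ℕ))

theorem corner_mem_corners (x : ℤ × ℤ) (k : ℕ) (s : Fin 6) : corner x k s ∈ corners x k := by
  fin_cases s <;> simp [corner, corners]

section Sides

variable {x : ℤ × ℤ} (hx : (x.1 + x.2) % 2 = 0)
include hx

theorem exists_dist_le_sideForm (v : ℤ × ℤ) :
    ∃ s, (TH.dist x v : ℤ) ≤ sideForm s (v.1 - x.1) (v.2 - x.2) := by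
  have h := hexEq_dist hx v
  unfold HexEq HexLe at h
  rcases (by omega : (TH.dist x v : ℤ) ≤ (v.1 - x.1) + (v.2 - x.2) + 1 ∨
      (TH.dist x v : ℤ) ≤ 2 * (v.1 - x.1) ∨
      (TH.dist x v : ℤ) ≤ (v.1 - x.1) - (v.2 - x.2) + 1 ∨
      (TH.dist x v : ℤ) ≤ -(v.1 - x.1) - (v.2 - x.2) + 1 ∨
      (TH.dist x v : ℤ) ≤ -2 * (v.1 - x.1) + 1 ∨
      (TH.dist x v : ℤ) ≤ -(v.1 - x.1) + (v.2 - x.2) + 1) with h | h | h | h | h | h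
  exacts [⟨0, h⟩, ⟨1, h⟩, ⟨2, h⟩, ⟨3, h⟩, ⟨4, h⟩, ⟨5, h⟩]

set_option maxHeartbeats 1000000 in
theorem le_sideForm_opposite_of_far {v u : ℤ × ℤ} {k m : ℕ} {s : Fin 6}
    (hv : TH.dist x v = k) (hs : k ≤ sideForm s (v.1 - x.1) (v.2 - x.2))
    (hv₀ : v ≠ corner x k s) (hv₁ : v ≠ corner x k (s + 1))
    (hu : TH.dist x u ≤ m) (huv : k + m ≤ TH.dist u v) :
    m ≤ sideForm (s + 3) (u.1 - x.1) (u.2 - x.2) := by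
  have hxv := (hexEq_dist hx v).1
  have hxu := (hexEq_dist hx u).1
  have huv' := isHexDist_dist u v
  unfold IsHexDist HexEq HexLe at *
  fin_cases s <;> simp only [Fin.reduceFinMk, Fin.reduceAdd, sideForm, corner, ne_eq,
    Prod.ext_iff] at * <;> omega

theorem dist_le_of_le_sideForm {u₁ u₂ : ℤ × ℤ} {m : ℕ} {s : Fin 6}
    (hu₁ : TH.dist x u₁ ≤ m) (hu₂ : TH.dist x u₂ ≤ m)
    (hs₁ : m ≤ sideForm s (u₁.1 - x.1) (u₁.2 - x.2))
    (hs₂ : m ≤ sideForm s (u₂.1 - x.1) (u₂.2 - x.2)) :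
    TH.dist u₁ u₂ ≤ m + 1 := by
  have h₁ := hexEq_dist hx u₁
  have h₂ := hexEq_dist hx u₂
  have h₁₂ := isHexDist_dist u₁ u₂
  unfold IsHexDist HexEq HexLe at *
  fin_cases s <;> simp only [sideForm] at * <;> omega

end Sides

theorem dist_le_of_far_from_noncorner {x v u₁ u₂ : ℤ × ℤ} {k m : ℕ} (hx : (x.1 + x.2) % 2 = 0)
    (hv : TH.dist x v = k) (hvc : v ∉ corners x k)
    (hu₁ : TH.dist x u₁ ≤ m) (hu₂ : TH.dist x u₂ ≤ m)
    (hu₁v : k + m ≤ TH.dist u₁ v) (hu₂v : k + m ≤ TH.dist u₂ v) :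
    TH.dist u₁ u₂ ≤ m + 1 := by
  obtain ⟨s, hs⟩ := exists_dist_le_sideForm hx v
  rw [hv] at hs
  have hv₀ : v ≠ corner x k s := fun h => hvc (h ▸ corner_mem_corners x k s)
  have hv₁ : v ≠ corner x k (s + 1) := fun h => hvc (h ▸ corner_mem_corners x k (s + 1))
  exact dist_le_of_le_sideForm hx hu₁ hu₂ (le_sideForm_opposite_of_far hx hv hs hv₀ hv₁ hu₁ hu₁v)
    (le_sideForm_opposite_of_far hx hv hs hv₀ hv₁ hu₂ hu₂v)

/-- The color of a non-corner vertex of `F_{x,p-q}` is reused at most once in `F_{x,p+q+1}`. -/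
theorem noncorner_reuse_at_most_once (i j : ℤ) (hx : (i + j) % 2 = 0)
    (p q : ℕ) (hp : 5 ≤ p) (hq : q ≤ p - 3)
    (v : ℤ × ℤ) (hv1 : TH.dist (i, j) v = p - q) (hv2 : v ∉ corners (i, j) (p - q))
    (f : ℤ × ℤ → ℕ) (hf : IsDistColoring (2*p) f) :
    {u : ℤ × ℤ | TH.dist (i, j) u = p + q + 1 ∧ f u = f v}.encard ≤ 1 := by
  rw [Set.encard_le_one_iff]
  rintro u₁ u₂ ⟨hu₁, hc₁⟩ ⟨hu₂, hc₂⟩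
  by_contra hne
  have far {u : ℤ × ℤ} (hu : TH.dist (i, j) u = p + q + 1) (hc : f u = f v) :
      p - q + (p + q + 1) ≤ TH.dist u v := by
    by_contra h
    exact hf u v (by rintro rfl; omega) (by omega) hc
  have hclose := dist_le_of_far_from_noncorner hx hv1 hv2 hu₁.le hu₂.le (far hu₁ hc₁) (far hu₂ hc₂)
  exact hf u₁ u₂ hne (by omega) (hc₁.trans hc₂.symm)
end

section
/- Let x = (i,j) be a right vertex of the infinite hexagonal grid T_H, let p ≥ 5 be an integer, and let f be a 2p-distance coloring of T_H. If the color f((i,j+p)) of the corner vertex (i,j+p) of F_{x,p} is assigned to two distinct vertices of F_{x,p+1}, then those two vertices are the corner vertices (i+⌈(p+1)/2⌉, j−⌊(p+1)/2⌋) and (i−⌊(p+1)/2⌋, j−⌈(p+1)/2⌉) of F_{x,p+1}. -/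
/-!
On `T_H` the graph distance is `max (|Δi| + |Δj|) |Δh|` for the height `h (i, j) = 2i - (i + j) % 2`:
along an edge each of the two terms changes by at most one, and from any vertex some neighbour
decreases the maximum. In these coordinates a vertex of `F_{x,p+1}` at distance more than `2p` from
the top corner `(i, j + p)` lies on the two lower sides `j' - j = |i' - i| - (p + 1)` of the hexagon,
where all vertices have height `2i' - (p + 1) % 2`. Two such vertices are at ℓ¹-distance at most
`p + 2`, so they can only be more than `2p` apart if their heights are `2i ± (p + 1)`, which makes
them the two lower corners.
-/

namespace SimpleGraph

variable {V : Type*} (G : SimpleGraph V) (d : V → V → ℕ)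

theorem le_length_of_le_succ_of_adj (hd_self : ∀ v, d v v = 0)
    (hd_adj : ∀ u w v, G.Adj u w → d u v ≤ d w v + 1) {u v : V} (p : G.Walk u v) :
    d u v ≤ p.length := by
  induction p with
  | nil => simp [hd_self]
  | cons h q ih => rw [Walk.length_cons]; exact (hd_adj _ _ _ h).trans (by omega)

theorem exists_walk_length_le_of_descent
    (hd_step : ∀ u v, u ≠ v → ∃ w, G.Adj u w ∧ d w v + 1 ≤ d u v) (u v : V) :
    ∃ p : G.Walk u v, p.length ≤ d u v := by
  induction hn : d u v using Nat.strong_induction_on generalizing u with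
  | _ n ih =>
    by_cases huv : u = v
    · subst huv; exact ⟨.nil, Nat.zero_le _⟩
    · obtain ⟨w, hadj, hw⟩ := hd_step u v huv
      obtain ⟨q, hq⟩ := ih _ (by omega) w rfl
      exact ⟨.cons hadj q, by rw [Walk.length_cons]; omega⟩

theorem dist_eq_of_descent (hd_self : ∀ v, d v v = 0)
    (hd_adj : ∀ u w v, G.Adj u w → d u v ≤ d w v + 1)
    (hd_step : ∀ u v, u ≠ v → ∃ w, G.Adj u w ∧ d w v + 1 ≤ d u v) (u v : V) :
    G.dist u v = d u v := by
  obtain ⟨p, hp⟩ := G.exists_walk_length_le_of_descent d hd_step u v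
  obtain ⟨q, hq⟩ := p.reachable.exists_walk_length_eq_dist
  have := G.le_length_of_le_succ_of_adj d hd_self hd_adj q
  have := G.dist_le p
  omega

end SimpleGraph

theorem IsDistColoring.lt_dist {l : ℕ} {f : ℤ × ℤ → ℕ} (hf : IsDistColoring l f) {u v : ℤ × ℤ}
    (huv : u ≠ v) (hfuv : f u = f v) : l < TH.dist u v :=
  lt_of_not_ge fun h => hf u v huv h hfuv

namespace HexGrid

def height (v : ℤ × ℤ) : ℤ := 2 * v.1 - (v.1 + v.2) % 2

def hexDist (u v : ℤ × ℤ) : ℕ :=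
  max ((u.1 - v.1).natAbs + (u.2 - v.2).natAbs) (height u - height v).natAbs

theorem hexDist_self (v : ℤ × ℤ) : hexDist v v = 0 := by simp [hexDist]

theorem hexDist_triangle (u w v : ℤ × ℤ) : hexDist u v ≤ hexDist u w + hexDist w v := by
  have hL1 : (u.1 - v.1).natAbs + (u.2 - v.2).natAbs ≤
      ((u.1 - w.1).natAbs + (u.2 - w.2).natAbs) + ((w.1 - v.1).natAbs + (w.2 - v.2).natAbs) := by
    omega
  have hheight : (height u - height v).natAbs ≤
      (height u - height w).natAbs + (height w - height v).natAbs := by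
    omega
  exact max_le (hL1.trans (add_le_add (le_max_left _ _) (le_max_left _ _)))
    (hheight.trans (add_le_add (le_max_right _ _) (le_max_right _ _)))

theorem hexDist_le_one_of_adj {u w : ℤ × ℤ} (h : TH.Adj u w) : hexDist u w ≤ 1 := by
  obtain ⟨a, b⟩ := u; obtain ⟨a', b'⟩ := w
  simp only [TH, hexDist, height] at h ⊢
  omega

theorem hexDist_le_of_adj {u w : ℤ × ℤ} (h : TH.Adj u w) (v : ℤ × ℤ) :
    hexDist u v ≤ hexDist w v + 1 := by
  have := hexDist_triangle u w v
  have := hexDist_le_one_of_adj h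
  omega

theorem exists_adj_hexDist_lt {u v : ℤ × ℤ} (h : u ≠ v) :
    ∃ w, TH.Adj u w ∧ hexDist w v + 1 ≤ hexDist u v := by
  obtain ⟨a, b⟩ := u; obtain ⟨c, d⟩ := v
  simp only [ne_eq, Prod.mk.injEq] at h
  simp only [TH, hexDist, height]
  by_cases hr : a < c ∧ (a + b) % 2 = 0
  · exact ⟨(a + 1, b), by omega, by omega⟩
  by_cases hl : c < a ∧ (a + b) % 2 = 1
  · exact ⟨(a - 1, b), by omega, by omega⟩
  by_cases hd : d < b
  · exact ⟨(a, b - 1), by omega, by omega⟩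
  -- this includes `b = d` with the horizontal edge at `u` pointing away from `v`: then the height
  -- term dominates, and a vertical step lowers it
  · exact ⟨(a, b + 1), by omega, by omega⟩

theorem dist_eq_hexDist (u v : ℤ × ℤ) : TH.dist u v = hexDist u v :=
  TH.dist_eq_of_descent hexDist hexDist_self (fun _ _ v h => hexDist_le_of_adj h v)
    (fun _ _ h => exists_adj_hexDist_lt h) u v

theorem l1_le_hexDist (u v : ℤ × ℤ) :
    (u.1 - v.1).natAbs + (u.2 - v.2).natAbs ≤ hexDist u v :=
  le_max_left _ _

theorem height_sub_le_hexDist (u v : ℤ × ℤ) : (height u - height v).natAbs ≤ hexDist u v :=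
  le_max_right _ _

theorem snd_eq_of_far_from_top_corner {i j a b : ℤ} {p : ℕ} (hx : (i + j) % 2 = 0) (hp : 2 ≤ p)
    (hd : hexDist (i, j) (a, b) = p + 1) (hfar : 2 * p < hexDist (a, b) (i, j + p)) :
    b = j + (a - i).natAbs - (p + 1) := by
  have hL1 := hd ▸ l1_le_hexDist (i, j) (a, b)
  have hheight := hd ▸ height_sub_le_hexDist (i, j) (a, b)
  rcases lt_max_iff.1 hfar with hfar | hfar
  · dsimp only at hL1 hfar
    omega
  · simp only [height] at hheight hfar
    omega

theorem height_eq_of_snd_eq {i j a b : ℤ} {p : ℕ} (hx : (i + j) % 2 = 0)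
    (hb : b = j + (a - i).natAbs - (p + 1)) : height (a, b) = 2 * a - (p + 1) % 2 := by
  simp only [height]
  omega

theorem fst_eq_of_far_apart {i j : ℤ} {p : ℕ} (hx : (i + j) % 2 = 0) (hp : 2 ≤ p)
    {a₁ b₁ a₂ b₂ : ℤ}
    (hd₁ : hexDist (i, j) (a₁, b₁) = p + 1) (hd₂ : hexDist (i, j) (a₂, b₂) = p + 1)
    (hb₁ : b₁ = j + (a₁ - i).natAbs - (p + 1)) (hb₂ : b₂ = j + (a₂ - i).natAbs - (p + 1))
    (hfar : 2 * p < hexDist (a₁, b₁) (a₂, b₂)) :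
    (a₁ = i + ((p+2)/2 : ℕ) ∧ a₂ = i - ((p+1)/2 : ℕ)) ∨
    (a₂ = i + ((p+2)/2 : ℕ) ∧ a₁ = i - ((p+1)/2 : ℕ)) := by
  have hheight : height (i, j) = 2 * i := by simp only [height, hx, sub_zero]
  have hheight₁ := height_eq_of_snd_eq hx hb₁
  have hheight₂ := height_eq_of_snd_eq hx hb₂
  have hh₁ := hd₁ ▸ height_sub_le_hexDist (i, j) (a₁, b₁)
  have hh₂ := hd₂ ▸ height_sub_le_hexDist (i, j) (a₂, b₂)
  rw [hheight, hheight₁] at hh₁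
  rw [hheight, hheight₂] at hh₂
  clear hd₁ hd₂
  have hL1 : (a₁ - a₂).natAbs + (b₁ - b₂).natAbs ≤ p + 2 := by
    clear hfar; omega
  have hgap : p + 1 ≤ (a₁ - a₂).natAbs := by
    rcases lt_max_iff.1 hfar with h | h
    · dsimp only at h; omega
    · rw [hheight₁, hheight₂] at h; omega
  clear hfar hL1 hb₁ hb₂
  omega

end HexGrid

/-- If the color of the corner vertex `(i, j+p)` of `F_{x,p}` is reused at two distinct
vertices of `F_{x,p+1}`, then those two vertices are the corner vertices
`(i+⌈(p+1)/2⌉, j-⌊(p+1)/2⌋)` and `(i-⌊(p+1)/2⌋, j-⌈(p+1)/2⌉)` of `F_{x,p+1}`. -/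
theorem corner_double_reuse_forced (i j : ℤ) (hx : (i + j) % 2 = 0) (p : ℕ) (hp : 5 ≤ p)
    (f : ℤ × ℤ → ℕ) (hf : IsDistColoring (2*p) f)
    (u₁ u₂ : ℤ × ℤ) (hne : u₁ ≠ u₂)
    (hd₁ : TH.dist (i, j) u₁ = p + 1) (hd₂ : TH.dist (i, j) u₂ = p + 1)
    (hc₁ : f u₁ = f (i, j + (p : ℤ))) (hc₂ : f u₂ = f (i, j + (p : ℤ))) :
    (u₁ = (i + ((p+2)/2 : ℕ), j - ((p+1)/2 : ℕ)) ∧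
     u₂ = (i - ((p+1)/2 : ℕ), j - ((p+2)/2 : ℕ))) ∨
    (u₂ = (i + ((p+2)/2 : ℕ), j - ((p+1)/2 : ℕ)) ∧
     u₁ = (i - ((p+1)/2 : ℕ), j - ((p+2)/2 : ℕ))) := by
  have hdc : TH.dist (i, j) (i, j + (p : ℤ)) = p := by
    rw [HexGrid.dist_eq_hexDist]; simp only [HexGrid.hexDist, HexGrid.height]; omega
  have hfar₁ := hf.lt_dist (fun h => by rw [h, hdc] at hd₁; omega) hc₁
  have hfar₂ := hf.lt_dist (fun h => by rw [h, hdc] at hd₂; omega) hc₂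
  have hfar₁₂ := hf.lt_dist hne (hc₁.trans hc₂.symm)
  obtain ⟨a₁, b₁⟩ := u₁
  obtain ⟨a₂, b₂⟩ := u₂
  rw [HexGrid.dist_eq_hexDist] at hd₁ hd₂ hfar₁ hfar₂ hfar₁₂
  have hb₁ := HexGrid.snd_eq_of_far_from_top_corner hx (by omega) hd₁ hfar₁
  have hb₂ := HexGrid.snd_eq_of_far_from_top_corner hx (by omega) hd₂ hfar₂
  simp only [Prod.mk.injEq]
  rcases HexGrid.fst_eq_of_far_apart hx (by omega) hd₁ hd₂ hb₁ hb₂ hfar₁₂ with ⟨h₁, h₂⟩ | ⟨h₁, h₂⟩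
  · left; omega
  · right; omega
end
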